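/- arXiv:2111.11102 — 2 statements merged into one kernel-verified Lean document; each statement's English description precedes it below -/
import Mathlib

section
/- The power series H/q ∈ K[[q]] has constant term 1, and log(H/q) = Σ_{m≥1} (1/m)·[z^{m}]{Q(z)^m}·q^m; equivalently H = q·exp(Σ_{m≥1} (1/m)·[z^{m}]{Q(z)^m}·q^m). (This is the logarithmic form of the Lagrange inversion formula for the solution of H = q·Q(H).) -/
open PowerSeries

/-- Composition `Q ∘ h` of formal power series, intended for `h` with zero constant
term (then `coeff n (h^k) = 0` for `k > n`, so the finite truncation below is the
honest composition / substitution of `h` into `Q`). -/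
noncomputable def pcomp {K : Type*} [Field K] (Q h : PowerSeries K) : PowerSeries K :=
  PowerSeries.mk fun n => ∑ k ∈ Finset.range (n + 1),
    PowerSeries.coeff k Q * PowerSeries.coeff n (h ^ k)

/-- The exponential series `Σ_{n≥0} z^n/n!`. -/
noncomputable def expSeries (K : Type*) [Field K] [CharZero K] : PowerSeries K :=
  PowerSeries.mk fun n => ((n.factorial : K))⁻¹

/-- The logarithm series `Σ_{m≥1} (−1)^{m+1} z^m/m` (its coefficient at `m = 0`
vanishes since `(0 : K)⁻¹ = 0`). -/
noncomputable def logSeries (K : Type*) [Field K] [CharZero K] : PowerSeries K :=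
  PowerSeries.mk fun n => (-1) ^ (n + 1) * (n : K)⁻¹

/-- The formal exponential `exp f` of a power series `f` with zero constant term. -/
noncomputable def expS {K : Type*} [Field K] [CharZero K] (f : PowerSeries K) : PowerSeries K :=
  pcomp (expSeries K) f

/-- The formal logarithm `log f = Σ_{m≥1} (−1)^{m+1}(f−1)^m/m` of a power series `f`
with constant term `1`. -/
noncomputable def logS {K : Type*} [Field K] [CharZero K] (f : PowerSeries K) : PowerSeries K :=
  pcomp (logSeries K) (f - 1)

/-!
Since `G = H/q = Q(H)`, the logarithm commutes with the substitution: `log G = (log Q)(H)`.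
The Lagrange–Bürmann formula `n [q^n] F(H) = [z^n] z F'(z) Q(z)^n`, applied to `F = log Q`
(for which `z F' Q^n = z Q' Q^(n-1)`, i.e. `z (Q^n)' / n`), gives `n [q^n] log G = [z^n] Q^n`.

Lagrange–Bürmann is proved together with its special case `n [q^n] H^j = j [z^(n-j)] Q^n`,
by strong induction on `n`: because `H^j = q^j Q(H)^j`, the coefficient `[q^n] H^j` is a
coefficient of `(Q^j)(H)` at the smaller index `n - j`.

Finally `exp (log G) = G`, because `exp (log G) / G` has derivative zero and constant term `1`.
-/

namespace PowerSeries

open Finset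

theorem coeff_X_mul_derivative {R : Type*} [CommSemiring R] (f : R⟦X⟧) (n : ℕ) :
    coeff n (X * d⁄dX R f) = n * coeff n f := by
  rcases n with _ | n
  · simp
  · rw [coeff_succ_X_mul, coeff_derivative, mul_comm]
    push_cast
    rfl

theorem derivative_pow_mul_pow {R : Type*} [CommSemiring R] (f : R⟦X⟧) (i j : ℕ) :
    d⁄dX R (f ^ i) * f ^ j = (i : R⟦X⟧) * (f ^ (i + j - 1) * d⁄dX R f) := by
  rw [derivative_pow]
  rcases i with _ | i
  · simp
  · rw [Nat.add_sub_cancel, show i + 1 + j - 1 = i + j by omega, pow_add]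
    ring

theorem coeff_subst_eq_sum_range {R : Type*} [CommRing R] {h : R⟦X⟧}
    (h0 : constantCoeff h = 0) (f : R⟦X⟧) (n : ℕ) :
    coeff n (f.subst h) = ∑ k ∈ range (n + 1), coeff k f * coeff n (h ^ k) := by
  rw [coeff_subst' (HasSubst.of_constantCoeff_zero' h0)]
  refine finsum_eq_sum_of_support_subset _ fun k hk => ?_
  rw [Function.mem_support] at hk
  rw [coe_range, Set.mem_Iio, Nat.lt_succ_iff]
  by_contra! hnk
  refine hk ?_
  rw [X_pow_dvd_iff.mp (pow_dvd_pow_of_dvd (X_dvd_iff.mpr h0) k) n hnk, smul_zero]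

section Logarithm

variable {A : Type*} [CommRing A] [Algebra ℚ A]

theorem derivative_log_mul_one_add_X : d⁄dX A (log A) * (1 + X) = 1 := by
  ext n
  rw [deriv_log, mul_add, mul_one, map_add]
  rcases n with _ | n
  · simp
  · simp [coeff_succ_mul_X, pow_succ]

theorem logOf_subst {f g : A⟦X⟧} (hf : constantCoeff f = 1) (hg : HasSubst g) :
    logOf (f.subst g) = (logOf f).subst g := by
  have hf0 : HasSubst (f - 1) :=
    HasSubst.of_constantCoeff_zero' (by rw [map_sub, hf, map_one, sub_self])
  rw [logOf_eq, logOf_eq, subst_comp_subst_apply hf0 hg, ← coe_substAlgHom hg, map_sub, map_one]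

end Logarithm

section Field

variable {K : Type*} [Field K]

theorem pcomp_eq_subst {h : K⟦X⟧} (h0 : constantCoeff h = 0) (f : K⟦X⟧) :
    pcomp f h = f.subst h := by
  ext n
  rw [coeff_subst_eq_sum_range h0, pcomp, coeff_mk]

variable [CharZero K]

theorem expS_eq_exp_subst {f : K⟦X⟧} (hf : constantCoeff f = 0) :
    expS f = (exp K).subst f := by
  have hexp : expSeries K = exp K := by
    ext n
    simp [expSeries]
  rw [expS, pcomp_eq_subst hf, hexp]

theorem logS_eq_logOf {f : K⟦X⟧} (hf : constantCoeff f = 1) : logS f = logOf f := by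
  have hlog : logSeries K = log K := by
    ext n
    rcases n with _ | n
    · simp [logSeries]
    · simp [logSeries, div_eq_mul_inv]
  rw [logS, pcomp_eq_subst (by rw [map_sub, hf, map_one, sub_self]), hlog, logOf_eq]

theorem derivative_logOf {f : K⟦X⟧} (hf : constantCoeff f = 1) :
    d⁄dX K (logOf f) = f⁻¹ * d⁄dX K f := by
  have hs := HasSubst.of_constantCoeff_zero' (by rw [map_sub, hf, map_one, sub_self] :
    constantCoeff (f - 1) = 0)
  have hinv : substAlgHom hs (d⁄dX K (log K)) * f = 1 := by
    have h1 : substAlgHom hs (1 + X : K⟦X⟧) = f := by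
      rw [map_add, map_one, substAlgHom_X]
      ring
    calc substAlgHom hs (d⁄dX K (log K)) * f
        = substAlgHom hs (d⁄dX K (log K) * (1 + X)) := by rw [map_mul, h1]
      _ = 1 := by rw [derivative_log_mul_one_add_X, map_one]
  rw [coe_substAlgHom] at hinv
  rw [logOf_eq, derivative_subst hs, map_sub, derivative_one, sub_zero,
    ← (PowerSeries.inv_eq_iff_mul_eq_one (by rw [hf]; exact one_ne_zero)).mpr hinv]

theorem exp_subst_logOf {f : K⟦X⟧} (hf : constantCoeff f = 1) :
    (exp K).subst (logOf f) = f := by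
  set E := (exp K).subst (logOf f)
  have hs := HasSubst.of_constantCoeff_zero' (constantCoeff_logOf hf)
  have hE : d⁄dX K E = E * (f⁻¹ * d⁄dX K f) := by
    rw [derivative_subst hs, derivative_exp, derivative_logOf hf]
  have hE1 : constantCoeff E = 1 := by
    rw [← coeff_zero_eq_constantCoeff_apply, coeff_subst_eq_sum_range (constantCoeff_logOf hf)]
    simp
  have hEf : E * f⁻¹ = 1 := by
    refine derivative.ext ?_ ?_
    · rw [Derivation.leibniz, smul_eq_mul, smul_eq_mul, derivative_inv', hE, derivative_one]
      ring
    · rw [map_mul, hE1, constantCoeff_inv, hf, inv_one, mul_one, map_one]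
  calc E = E * f⁻¹ * f := by
        rw [mul_assoc, PowerSeries.inv_mul_cancel f (by rw [hf]; exact one_ne_zero), mul_one]
    _ = f := by rw [hEf, one_mul]

end Field

section Lagrange

variable {R : Type*} [CommRing R] {Q H : R⟦X⟧}

theorem coeff_subst_lagrange_of_coeff_pow (hH0 : constantCoeff H = 0) {n : ℕ}
    (hpow : ∀ j ≤ n, (n : R) * coeff n (H ^ j) = j * coeff (n - j) (Q ^ n)) (F : R⟦X⟧) :
    (n : R) * coeff n (F.subst H) = coeff n (X * d⁄dX R F * Q ^ n) := by
  rw [coeff_subst_eq_sum_range hH0, mul_sum, coeff_mul,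
    Nat.sum_antidiagonal_eq_sum_range_succ_mk]
  refine sum_congr rfl fun k hk => ?_
  rw [coeff_X_mul_derivative, mul_left_comm, hpow k (Nat.lt_succ_iff.mp (mem_range.mp hk))]
  ring

variable [IsDomain R] [CharZero R]

theorem coeff_pow_lagrange_of_coeff_subst (hH0 : constantCoeff H = 0)
    (hH : H = X * Q.subst H) {n j : ℕ} (hj : j ≤ n)
    (hsubst : ∀ F : R⟦X⟧, ((n - j : ℕ) : R) * coeff (n - j) (F.subst H)
      = coeff (n - j) (X * d⁄dX R F * Q ^ (n - j))) :
    (n : R) * coeff n (H ^ j) = j * coeff (n - j) (Q ^ n) := by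
  have hHj : coeff n (H ^ j) = coeff (n - j) ((Q ^ j).subst H) := by
    conv_lhs => rw [hH]
    rw [mul_pow, ← subst_pow (HasSubst.of_constantCoeff_zero' hH0), coeff_X_pow_mul', if_pos hj]
  rcases hj.eq_or_lt with rfl | hlt
  · rw [hHj, Nat.sub_self, coeff_subst_eq_sum_range hH0]
    simp
  set r := n - j
  have hr : (r : R) ≠ 0 := Nat.cast_ne_zero.mpr (Nat.sub_pos_of_lt hlt).ne'
  have hQn : X * d⁄dX R (Q ^ n) = (n : R⟦X⟧) * (X * (Q ^ (n - 1) * d⁄dX R Q)) := by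
    rw [derivative_pow]
    ring
  have hQjr : X * d⁄dX R (Q ^ j) * Q ^ r = (j : R⟦X⟧) * (X * (Q ^ (n - 1) * d⁄dX R Q)) := by
    rw [mul_assoc, derivative_pow_mul_pow, show j + r - 1 = n - 1 by omega]
    ring
  refine mul_left_cancel₀ hr ?_
  calc (r : R) * (n * coeff n (H ^ j))
      = n * coeff r (X * d⁄dX R (Q ^ j) * Q ^ r) := by rw [← hsubst, hHj]; ring
    _ = j * coeff r (X * d⁄dX R (Q ^ n)) := by
      rw [hQjr, hQn, ← map_natCast (C (R := R)), ← map_natCast (C (R := R)), coeff_C_mul,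
        coeff_C_mul]
      ring
    _ = r * (j * coeff r (Q ^ n)) := by rw [coeff_X_mul_derivative]; ring

theorem coeff_pow_lagrange (hH0 : constantCoeff H = 0) (hH : H = X * Q.subst H) {n j : ℕ}
    (hj : j ≤ n) : (n : R) * coeff n (H ^ j) = j * coeff (n - j) (Q ^ n) := by
  induction n using Nat.strong_induction_on generalizing j with
  | _ n ih =>
  rcases Nat.eq_zero_or_pos j with rfl | hj0
  · rcases n with _ | n <;> simp [coeff_one]
  refine coeff_pow_lagrange_of_coeff_subst hH0 hH hj fun F => ?_
  exact coeff_subst_lagrange_of_coeff_pow hH0 (fun _ hk => ih (n - j) (by omega) hk) F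

theorem coeff_subst_lagrange (hH0 : constantCoeff H = 0) (hH : H = X * Q.subst H)
    (F : R⟦X⟧) (n : ℕ) :
    (n : R) * coeff n (F.subst H) = coeff n (X * d⁄dX R F * Q ^ n) :=
  coeff_subst_lagrange_of_coeff_pow hH0 (fun _ hj => coeff_pow_lagrange hH0 hH hj) F

end Lagrange

theorem coeff_logOf_subst {K : Type*} [Field K] [CharZero K] {Q H : K⟦X⟧}
    (hQ1 : constantCoeff Q = 1) (hH0 : constantCoeff H = 0) (hH : H = X * Q.subst H) (n : ℕ) :
    coeff n ((logOf Q).subst H) = (n : K)⁻¹ * coeff n (Q ^ n) := by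
  rcases n with _ | n
  · rw [coeff_subst_eq_sum_range hH0]
    simp [constantCoeff_logOf hQ1]
  have hQ : Q⁻¹ * Q = 1 := PowerSeries.inv_mul_cancel Q (by rw [hQ1]; exact one_ne_zero)
  have hlog : X * d⁄dX K (logOf Q) * Q ^ (n + 1) = X * (Q ^ n * d⁄dX K Q) := by
    rw [derivative_logOf hQ1, pow_succ']
    linear_combination (X * Q ^ n * d⁄dX K Q) * hQ
  have hpow :
      X * d⁄dX K (Q ^ (n + 1)) = ((n + 1 : ℕ) : K⟦X⟧) * (X * (Q ^ n * d⁄dX K Q)) := by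
    rw [derivative_pow, Nat.add_sub_cancel]
    ring
  have hn : ((n + 1 : ℕ) : K) ≠ 0 := Nat.cast_ne_zero.mpr n.succ_ne_zero
  have hlagrange := coeff_subst_lagrange hH0 hH (logOf Q) (n + 1)
  have hQpow := coeff_X_mul_derivative (Q ^ (n + 1)) (n + 1)
  rw [hlog] at hlagrange
  rw [hpow, ← map_natCast (C (R := K)), coeff_C_mul, ← hlagrange] at hQpow
  rw [eq_inv_mul_iff_mul_eq₀ hn]
  exact mul_left_cancel₀ hn hQpow

end PowerSeries

/-- Let `K` be a field of characteristic zero, `Q ∈ K[[z]]` with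
constant term `1`, and let `H ∈ K[[q]]` be the formal power series with zero constant
term satisfying `H = q·Q(H)`.  Writing `H = q·G` (i.e. `G = H/q`), the power series
`H/q` has constant term `1`, `log (H/q) = Σ_{m≥1} (1/m)·[z^m]{Q(z)^m}·q^m`, and
equivalently `H = q·exp (Σ_{m≥1} (1/m)·[z^m]{Q(z)^m}·q^m)`. -/
theorem stmt5 {K : Type*} [Field K] [CharZero K] (Q H : PowerSeries K)
    (hQ1 : PowerSeries.constantCoeff Q = 1)
    (hH0 : PowerSeries.constantCoeff H = 0)
    (hH : H = PowerSeries.X * pcomp Q H)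
    (G : PowerSeries K) (hG : H = PowerSeries.X * G) :
    PowerSeries.constantCoeff G = 1 ∧
    logS G = PowerSeries.mk (fun m => (m : K)⁻¹ * PowerSeries.coeff m (Q ^ m)) ∧
    H = PowerSeries.X *
      expS (PowerSeries.mk fun m => (m : K)⁻¹ * PowerSeries.coeff m (Q ^ m)) := by
  rw [pcomp_eq_subst hH0] at hH
  have hGQ : G = Q.subst H := mul_left_cancel₀ X_ne_zero (hG.symm.trans hH)
  have hG1 : constantCoeff G = 1 := by
    rw [← coeff_zero_eq_constantCoeff_apply, hGQ, coeff_subst_eq_sum_range hH0]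
    simp [hQ1]
  have hlog : logS G = mk fun m => (m : K)⁻¹ * coeff m (Q ^ m) := by
    ext m
    rw [logS_eq_logOf hG1, hGQ, logOf_subst hQ1 (HasSubst.of_constantCoeff_zero' hH0),
      coeff_logOf_subst hQ1 hH0 hH, coeff_mk]
  refine ⟨hG1, hlog, ?_⟩
  rw [← hlog, logS_eq_logOf hG1, expS_eq_exp_subst (constantCoeff_logOf hG1),
    exp_subst_logOf hG1, hG]
end

section
/- (i) Every formal power series h ∈ K[[u]] with zero constant term satisfying h(u)^e = u^e·Q(h(u)) has u-order exactly 1, and its linear coefficient c := [u^1]{h} satisfies c^e = Q(0) (in particular c ≠ 0). (ii) Conversely, for every c ∈ K with c^e = Q(0) there exists exactly one formal power series h ∈ K[[u]] with zero constant term, linear coefficient c, and h(u)^e = u^e·Q(h(u)). (iii) Consequently, if K contains a primitive e-th root of unity ω and some element c with c^e = Q(0), then the set of solutions h ∈ u·K[[u]] of h(u)^e = u^e·Q(h(u)) is exactly the e distinct series u ↦ h_0(ω^i u), i = 1,…,e, where h_0 is the solution with linear coefficient c; these are the Newton–Puiseux solutions of H^e = q·Q(H) under q = u^e. -/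
/-!
Writing `h = X g`, the equation becomes `g ^ e = Q (X g)`, whose constant term forces
`g(0) ^ e = Q(0)`. For a fixed `c = g(0)`, the Newton iteration with the derivative frozen at
the constant term, `g ↦ g + (e c ^ (e - 1))⁻¹ (Q (X g) - g ^ e)`, gains one `X`-adic digit
per step: `Q (X g)` sees `g` only through `X g`, and `g ^ e - g' ^ e = (g - g') t` with
`t(0) = e c ^ (e - 1)`. By `X`-adic completeness it has exactly one fixed point with
constant term `c`. The substitution `u ↦ ω ^ i u` preserves the equation, since
`(ω ^ i) ^ e = 1`, and multiplies the linear coefficient by `ω ^ i`; for `i = 1, …, e`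
these factors are all the `e`-th roots of unity, i.e. all ratios of two admissible
linear coefficients.
-/

open PowerSeries

open Function

theorem RingHom.exists_pow_sub_pow_eq_sub_mul {A B : Type*} [CommRing A] [CommRing B]
    (φ : A →+* B) {a b : A} {c : B} (ha : φ a = c) (hb : φ b = c) (n : ℕ) :
    ∃ t, a ^ n - b ^ n = (a - b) * t ∧ φ t = n * c ^ (n - 1) :=
  ⟨_, (geom_sum₂_mul a b n).symm.trans (mul_comm _ _), by
    rw [φ.map_geom_sum₂, ha, hb, geom_sum₂_self]⟩

theorem IsPrimitiveRoot.exists_mem_Icc_pow_eq {R : Type*} [CommRing R] [IsDomain R] {ω x : R}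
    {k : ℕ} [NeZero k] (hω : IsPrimitiveRoot ω k) (hx : x ^ k = 1) :
    ∃ i ∈ Finset.Icc 1 k, ω ^ i = x := by
  -- `ω ^ (k - 1) = ω⁻¹` shifts the exponents `0, …, k - 1` to `1, …, k`
  have hx' : (x * ω ^ (k - 1)) ^ k = 1 := by
    rw [mul_pow, hx, one_mul, pow_right_comm, hω.pow_eq_one, one_pow]
  obtain ⟨i, hi, hωi⟩ := hω.eq_pow_of_pow_eq_one hx'
  refine ⟨i + 1, Finset.mem_Icc.2 ⟨Nat.le_add_left 1 i, hi⟩, ?_⟩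
  rw [pow_succ, hωi, mul_assoc, ← pow_succ, Nat.sub_add_cancel NeZero.one_le, hω.pow_eq_one,
    mul_one]

theorem IsPrimitiveRoot.injOn_pow_Icc {R : Type*} [CommRing R] [IsDomain R] {ω : R} {k : ℕ}
    (hω : IsPrimitiveRoot ω k) : Set.InjOn (ω ^ ·) (Finset.Icc 1 k) := by
  intro i hi j hj hij
  simp only [Finset.coe_Icc, Set.mem_Icc] at hi hj
  have := hω.injOn_pow_mul (hω.ne_zero (by omega)) (x₁ := i - 1) (x₂ := j - 1)
    (Finset.mem_coe.2 (Finset.mem_range.2 (by omega)))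
    (Finset.mem_coe.2 (Finset.mem_range.2 (by omega)))
    (by simpa only [← pow_succ, Nat.sub_add_cancel hi.1, Nat.sub_add_cancel hj.1] using hij)
  omega

namespace PowerSeries

variable {R : Type*} [CommRing R]

theorem sModEq_span_X_pow_iff {n : ℕ} {f g : R⟦X⟧} :
    f ≡ g [SMOD (Ideal.span {(X : R⟦X⟧)} ^ n • ⊤ : Submodule R⟦X⟧ R⟦X⟧)] ↔ X ^ n ∣ f - g := by
  rw [SModEq.sub_mem, Ideal.span_singleton_pow, ← Ideal.mem_span_singleton]
  simp

theorem eq_of_forall_X_pow_dvd_sub {f g : R⟦X⟧} (h : ∀ n, X ^ n ∣ f - g) : f = g :=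
  (IsHausdorff.eq_iff_smodEq (I := Ideal.span {X})).2 fun n => sModEq_span_X_pow_iff.2 (h n)

theorem exists_forall_X_pow_dvd_sub_of_cauchy (f : ℕ → R⟦X⟧)
    (hf : ∀ m n, m ≤ n → X ^ m ∣ f m - f n) : ∃ L, ∀ n, X ^ n ∣ f n - L := by
  obtain ⟨L, hL⟩ := IsPrecomplete.prec (I := Ideal.span {(X : R⟦X⟧)}) inferInstance
    (fun {m n} hmn => sModEq_span_X_pow_iff.2 (hf m n hmn))
  exact ⟨L, fun n => sModEq_span_X_pow_iff.1 (hL n)⟩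

theorem existsUnique_isFixedPt_of_X_pow_dvd (a : R) (G : R⟦X⟧ → R⟦X⟧)
    (hG₀ : ∀ s, constantCoeff s = a → constantCoeff (G s) = a)
    (hG : ∀ s s', constantCoeff s = a → constantCoeff s' = a →
      ∀ n, X ^ n ∣ s - s' → X ^ (n + 1) ∣ G s - G s') :
    ∃! s, constantCoeff s = a ∧ IsFixedPt G s := by
  set F : ℕ → R⟦X⟧ := fun m => G^[m] (C a)
  have hF₀ (m : ℕ) : constantCoeff (F m) = a := by
    induction m with
    | zero => simp [F]
    | succ m ih => simpa only [F, iterate_succ_apply'] using hG₀ _ ih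
  have hF (m n : ℕ) (hmn : m ≤ n) : X ^ m ∣ F m - F n := by
    induction m generalizing n with
    | zero => simp
    | succ m ih =>
      obtain ⟨n, rfl⟩ := Nat.exists_eq_add_of_le' (Nat.zero_lt_of_lt hmn)
      simpa only [F, iterate_succ_apply'] using
        hG _ _ (hF₀ m) (hF₀ n) m (ih n (by omega))
  obtain ⟨L, hL⟩ := exists_forall_X_pow_dvd_sub_of_cauchy F hF
  have hL₀ : constantCoeff L = a := by
    have := X_dvd_iff.1 (pow_one (X : R⟦X⟧) ▸ hL 1)
    rwa [map_sub, hF₀, sub_eq_zero, eq_comm] at this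
  have hLfix : IsFixedPt G L := by
    refine eq_of_forall_X_pow_dvd_sub fun n => ?_
    have h₁ : X ^ n ∣ G L - G (F n) :=
      (pow_dvd_pow X n.le_succ).trans (hG _ _ hL₀ (hF₀ n) n (dvd_sub_comm.1 (hL n)))
    have h₂ : G (F n) = F (n + 1) := (iterate_succ_apply' G n (C a)).symm
    simpa [h₂] using dvd_add h₁ ((pow_dvd_pow X n.le_succ).trans (hL (n + 1)))
  refine ⟨L, ⟨hL₀, hLfix⟩, fun s ⟨hs₀, hs⟩ => ?_⟩
  refine eq_of_forall_X_pow_dvd_sub fun n => ?_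
  induction n with
  | zero => simp
  | succ n ih => simpa only [hs.eq, hLfix.eq] using hG _ _ hs₀ hL₀ n ih

@[simp]
theorem constantCoeff_rescale (a : R) (f : R⟦X⟧) :
    constantCoeff (rescale a f) = constantCoeff f := by
  rw [← coeff_zero_eq_constantCoeff_apply, coeff_rescale, pow_zero, one_mul,
    coeff_zero_eq_constantCoeff_apply]

theorem coeff_one_X_mul (g : R⟦X⟧) : coeff 1 (X * g) = constantCoeff g :=
  (coeff_succ_X_mul 0 g).trans (coeff_zero_eq_constantCoeff_apply g)

end PowerSeries

section

variable {K : Type*} [Field K]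

theorem coeff_pcomp (Q h : K⟦X⟧) (n : ℕ) :
    coeff n (pcomp Q h) = ∑ k ∈ Finset.range (n + 1), coeff k Q * coeff n (h ^ k) :=
  coeff_mk _ _

@[simp]
theorem constantCoeff_pcomp (Q h : K⟦X⟧) : constantCoeff (pcomp Q h) = constantCoeff Q := by
  rw [← coeff_zero_eq_constantCoeff_apply, coeff_pcomp]
  simp

theorem X_pow_dvd_pcomp_sub_pcomp (Q : K⟦X⟧) {h h' : K⟦X⟧} {n : ℕ}
    (hh : X ^ n ∣ h - h') : X ^ n ∣ pcomp Q h - pcomp Q h' := by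
  refine X_pow_dvd_iff.2 fun m hm => ?_
  have hpow (k : ℕ) : coeff m (h ^ k) = coeff m (h' ^ k) := by
    simpa [sub_eq_zero] using X_pow_dvd_iff.1 (hh.trans (sub_dvd_pow_sub_pow h h' k)) m hm
  simp [coeff_pcomp, hpow]

theorem pcomp_rescale (Q h : K⟦X⟧) (a : K) : pcomp Q (rescale a h) = rescale a (pcomp Q h) := by
  ext n
  simp only [coeff_rescale, coeff_pcomp, ← map_pow, Finset.mul_sum]
  exact Finset.sum_congr rfl fun _ _ => by ring

noncomputable def newtonMap (Q : K⟦X⟧) (e : ℕ) (c : K) (g : K⟦X⟧) : K⟦X⟧ :=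
  g + C (e * c ^ (e - 1) : K)⁻¹ * (pcomp Q (X * g) - g ^ e)

variable {Q : K⟦X⟧} {e : ℕ} {c : K}

theorem isFixedPt_newtonMap_iff (he : (e : K) ≠ 0) (hc : c ≠ 0) {g : K⟦X⟧} :
    IsFixedPt (newtonMap Q e c) g ↔ g ^ e = pcomp Q (X * g) := by
  have hC : C (e * c ^ (e - 1) : K)⁻¹ ≠ 0 := by simp [he, hc]
  rw [IsFixedPt, newtonMap, add_eq_left, mul_eq_zero, or_iff_right hC, sub_eq_zero, eq_comm]

theorem constantCoeff_newtonMap (hc : c ^ e = constantCoeff Q) {g : K⟦X⟧}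
    (hg : constantCoeff g = c) : constantCoeff (newtonMap Q e c g) = c := by
  simp [newtonMap, hg, hc]

theorem X_pow_succ_dvd_newtonMap_sub (he : (e : K) ≠ 0) (hc : c ≠ 0) {g g' : K⟦X⟧}
    (hg : constantCoeff g = c) (hg' : constantCoeff g' = c) {n : ℕ} (hn : X ^ n ∣ g - g') :
    X ^ (n + 1) ∣ newtonMap Q e c g - newtonMap Q e c g' := by
  obtain ⟨t, ht, ht₀⟩ := (constantCoeff (R := K)).exists_pow_sub_pow_eq_sub_mul hg hg' e
  set d : K := e * c ^ (e - 1)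
  have hsplit : newtonMap Q e c g - newtonMap Q e c g' =
      (g - g') * (1 - C d⁻¹ * t) + C d⁻¹ * (pcomp Q (X * g) - pcomp Q (X * g')) := by
    simp only [newtonMap]
    linear_combination (-C d⁻¹) * ht
  have hX : X ∣ 1 - C d⁻¹ * t := by
    rw [X_dvd_iff, map_sub, map_one, map_mul, constantCoeff_C, ht₀,
      inv_mul_cancel₀ (mul_ne_zero he (pow_ne_zero _ hc)), sub_self]
  rw [hsplit]
  refine dvd_add ?_ (dvd_mul_of_dvd_right (X_pow_dvd_pcomp_sub_pcomp Q ?_) _)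
  · rw [pow_succ]
    exact mul_dvd_mul hn hX
  · rw [← mul_sub, pow_succ']
    exact mul_dvd_mul_left X hn

theorem existsUnique_pow_eq_pcomp_X_mul (he : (e : K) ≠ 0) (hc₀ : c ≠ 0)
    (hc : c ^ e = constantCoeff Q) :
    ∃! g : K⟦X⟧, constantCoeff g = c ∧ g ^ e = pcomp Q (X * g) := by
  simpa only [isFixedPt_newtonMap_iff he hc₀] using
    existsUnique_isFixedPt_of_X_pow_dvd c (newtonMap Q e c)
      (fun _ => constantCoeff_newtonMap hc)
      fun _ _ hg hg' _ => X_pow_succ_dvd_newtonMap_sub he hc₀ hg hg'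

theorem X_mul_pow_eq_X_pow_mul_pcomp_iff {g : K⟦X⟧} :
    (X * g) ^ e = X ^ e * pcomp Q (X * g) ↔ g ^ e = pcomp Q (X * g) := by
  rw [mul_pow]
  exact mul_right_inj' (pow_ne_zero _ X_ne_zero)

theorem coeff_one_pow_eq_constantCoeff {h : K⟦X⟧} (h₀ : constantCoeff h = 0)
    (heq : h ^ e = X ^ e * pcomp Q h) : coeff 1 h ^ e = constantCoeff Q := by
  obtain ⟨g, rfl⟩ := X_dvd_iff.2 h₀
  rw [X_mul_pow_eq_X_pow_mul_pcomp_iff] at heq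
  simpa [coeff_one_X_mul] using congrArg constantCoeff heq

theorem existsUnique_pow_eq_X_pow_mul_pcomp (he : (e : K) ≠ 0) (hc₀ : c ≠ 0)
    (hc : c ^ e = constantCoeff Q) :
    ∃! h : K⟦X⟧, constantCoeff h = 0 ∧ coeff 1 h = c ∧ h ^ e = X ^ e * pcomp Q h := by
  obtain ⟨g, ⟨hg₀, hg⟩, hg_unique⟩ := existsUnique_pow_eq_pcomp_X_mul he hc₀ hc
  refine ⟨X * g, ⟨by simp, by rw [coeff_one_X_mul, hg₀],
    X_mul_pow_eq_X_pow_mul_pcomp_iff.2 hg⟩, ?_⟩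
  rintro h ⟨h₀, h₁, heq⟩
  obtain ⟨g', rfl⟩ := X_dvd_iff.2 h₀
  rw [hg_unique g' ⟨by rwa [← coeff_one_X_mul], X_mul_pow_eq_X_pow_mul_pcomp_iff.1 heq⟩]

theorem rescale_pow_eq_X_pow_mul_pcomp {a : K} (ha : a ^ e = 1) {h : K⟦X⟧}
    (heq : h ^ e = X ^ e * pcomp Q h) :
    rescale a h ^ e = X ^ e * pcomp Q (rescale a h) := by
  rw [← map_pow, heq, map_mul, map_pow, rescale_X, pcomp_rescale, mul_pow, ← map_pow, ha,
    map_one, one_mul]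

end

/-- Let `K` be a field of characteristic zero, `e ≥ 1` an integer and
`Q ∈ K[[z]]` with `Q(0) ≠ 0`.
(i) Every `h ∈ K[[u]]` with zero constant term satisfying `h(u)^e = u^e·Q(h(u))` has
`u`-order exactly `1`, and its linear coefficient `c = [u^1]{h}` satisfies
`c^e = Q(0)` (in particular `c ≠ 0`).
(ii) Conversely, for every `c ∈ K` with `c^e = Q(0)` there is exactly one
`h ∈ K[[u]]` with zero constant term, linear coefficient `c` and
`h(u)^e = u^e·Q(h(u))`.
(iii) Consequently, if `K` contains a primitive `e`-th root of unity `ω` and some `c`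
with `c^e = Q(0)`, and `h₀` is the solution with linear coefficient `c`, then the
solutions `h ∈ u·K[[u]]` of `h^e = u^e·Q(h)` are exactly the series
`u ↦ h₀(ω^i·u)`, `i = 1,…,e`, and these `e` series are pairwise distinct. -/
theorem stmt6 {K : Type*} [Field K] [CharZero K] (e : ℕ) (he : 1 ≤ e)
    (Q : PowerSeries K) (hQ0 : PowerSeries.constantCoeff Q ≠ 0) :
    (∀ h : PowerSeries K, PowerSeries.constantCoeff h = 0 →
        h ^ e = PowerSeries.X ^ e * pcomp Q h →
        h.order = 1 ∧ (PowerSeries.coeff 1 h) ^ e = PowerSeries.constantCoeff Q ∧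
          PowerSeries.coeff 1 h ≠ 0) ∧
    (∀ c : K, c ^ e = PowerSeries.constantCoeff Q →
        ∃! h : PowerSeries K, PowerSeries.constantCoeff h = 0 ∧
          PowerSeries.coeff 1 h = c ∧ h ^ e = PowerSeries.X ^ e * pcomp Q h) ∧
    (∀ ω : K, IsPrimitiveRoot ω e → ∀ c : K, c ^ e = PowerSeries.constantCoeff Q →
        ∀ h₀ : PowerSeries K, PowerSeries.constantCoeff h₀ = 0 →
          PowerSeries.coeff 1 h₀ = c → h₀ ^ e = PowerSeries.X ^ e * pcomp Q h₀ →
          (∀ h : PowerSeries K,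
              (PowerSeries.constantCoeff h = 0 ∧ h ^ e = PowerSeries.X ^ e * pcomp Q h) ↔
              ∃ i ∈ Finset.Icc 1 e, h = PowerSeries.rescale (ω ^ i) h₀) ∧
          (∀ i ∈ Finset.Icc 1 e, ∀ j ∈ Finset.Icc 1 e,
              PowerSeries.rescale (ω ^ i) h₀ = PowerSeries.rescale (ω ^ j) h₀ → i = j)) := by
  have : NeZero e := ⟨by omega⟩
  have heK : (e : K) ≠ 0 := NeZero.ne _
  have hne {c : K} (hc : c ^ e = constantCoeff Q) : c ≠ 0 :=
    ne_zero_pow (NeZero.ne e) (hc ▸ hQ0)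
  have huniq {c : K} (hc : c ^ e = constantCoeff Q) :=
    existsUnique_pow_eq_X_pow_mul_pcomp heK (hne hc) hc
  refine ⟨fun h hh₀ heq => ?_, fun c hc => huniq hc,
    fun ω hω c hc h₀ h₀₀ h₀₁ h₀eq => ?_⟩
  · have hc := coeff_one_pow_eq_constantCoeff hh₀ heq
    refine ⟨order_eq_nat.2 ⟨hne hc, fun i hi => ?_⟩, hc, hne hc⟩
    rwa [Nat.lt_one_iff.1 hi, coeff_zero_eq_constantCoeff_apply]
  have hcoeff (i : ℕ) : coeff 1 (rescale (ω ^ i) h₀) = ω ^ i * c := by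
    rw [coeff_rescale, pow_one, h₀₁]
  have hsol (i : ℕ) := rescale_pow_eq_X_pow_mul_pcomp (a := ω ^ i)
    (by rw [pow_right_comm, hω.pow_eq_one, one_pow]) h₀eq
  refine ⟨fun h => ⟨fun ⟨hh₀, heq⟩ => ?_, ?_⟩, fun i hi j hj hij => ?_⟩
  · have hc' := coeff_one_pow_eq_constantCoeff hh₀ heq
    obtain ⟨i, hi, hωi⟩ := hω.exists_mem_Icc_pow_eq (x := coeff 1 h / c) (by
      rw [div_pow, hc', hc, div_self hQ0])
    refine ⟨i, hi, (huniq hc').unique ⟨hh₀, rfl, heq⟩ ⟨?_, ?_, hsol i⟩⟩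
    · simp [h₀₀]
    · rw [hcoeff, hωi, div_mul_cancel₀ _ (hne hc)]
  · rintro ⟨i, -, rfl⟩
    exact ⟨by simp [h₀₀], hsol i⟩
  · exact hω.injOn_pow_Icc hi hj (mul_right_cancel₀ (hne hc) (by rw [← hcoeff, hij, hcoeff]))
end
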